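/- arXiv:0901.0335 — 2 statements merged into one kernel-verified Lean document; each statement's English description precedes it below -/
import Mathlib

section
/- Let G = G_1 × ... × G_k be a product of finite abelian groups of orders s_i with normalized character tables U_i, U = U_1 ⊗ ... ⊗ U_k, and let O: G → ℕ be a multiplicity function viewed as a vector in ℂ^s. Let M = M_1 ⊗ ... ⊗ M_k where each M_i is P_i (projection onto the identity coordinate), Q_i = I_i − P_i, or I_i. Then ‖MUO‖² depends only on the underlying sets G_i with their distinguished identity elements and on O, not on the chosen abelian group structures of the G_i. -/
open Finset
open scoped ComplexConjugate

set_option linter.unusedSectionVars false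

namespace NPI

variable {A : Type*} [CommGroup A] [Fintype A]

lemma char_ne_zero (ψ : A →* ℂ) (b : A) : ψ b ≠ 0 := by
  intro h
  have h2 : ψ b * ψ b⁻¹ = 1 := by rw [← map_mul, mul_inv_cancel, map_one]
  rw [h, zero_mul] at h2; exact zero_ne_one h2

lemma char_inv (ψ : A →* ℂ) (b : A) : ψ b⁻¹ = (ψ b)⁻¹ := by
  have h2 : ψ b⁻¹ * ψ b = 1 := by rw [← map_mul, inv_mul_cancel, map_one]
  exact eq_inv_of_mul_eq_one_left h2

lemma conj_char (ψ : A →* ℂ) (b : A) : (starRingEnd ℂ) (ψ b) = ψ b⁻¹ := by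
  have hpow : ψ b ^ Fintype.card A = 1 := by rw [← map_pow, pow_card_eq_one, map_one]
  have hnorm : ‖ψ b‖ = 1 := Complex.norm_eq_one_of_pow_eq_one hpow Fintype.card_ne_zero
  rw [char_inv, ← Complex.inv_eq_conj hnorm]

lemma sum_char (ψ : A →* ℂ) : ∑ b : A, ψ b = if ψ = 1 then (Fintype.card A : ℂ) else 0 := by
  split_ifs with h
  · subst h; simp
  · obtain ⟨b₀, hb₀⟩ : ∃ b₀, ψ b₀ ≠ 1 := by
      by_contra hc; push_neg at hc
      exact h (MonoidHom.ext fun b => by rw [hc]; rfl)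
    have key : ∑ b : A, ψ b₀ * ψ b = ∑ b : A, ψ b :=
      Fintype.sum_bijective (b₀ * ·) (Group.mulLeft_bijective b₀) _ _
        (fun b => (map_mul ψ b₀ b).symm)
    have h0 : (ψ b₀ - 1) * ∑ b : A, ψ b = 0 := by
      rw [sub_mul, one_mul, Finset.mul_sum, key, sub_self]
    rcases mul_eq_zero.mp h0 with h1 | h2
    · exact absurd (by linear_combination h1) hb₀
    · exact h2

section Coord

variable {G : Type*} [Fintype G] [DecidableEq G]

/-- normalized character table entry -/
noncomputable def u (e : A ≃ G) (χ : A ≃* (A →* ℂ)) (g h : G) : ℂ :=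
  (Real.sqrt (Fintype.card G) : ℂ)⁻¹ * χ (e.symm g) (e.symm h)

lemma card_eq (e : A ≃ G) : Fintype.card G = Fintype.card A := Fintype.card_congr e.symm

lemma sqrt_mul_self (e : A ≃ G) :
    ((Real.sqrt (Fintype.card G) : ℂ))⁻¹ * ((Real.sqrt (Fintype.card G) : ℂ))⁻¹
      = ((Fintype.card G : ℂ))⁻¹ := by
  rw [← mul_inv]
  congr 1
  rw [← Complex.ofReal_mul, Real.mul_self_sqrt (Nat.cast_nonneg _)]
  push_cast; ring

lemma conj_sqrt_inv :
    (starRingEnd ℂ) ((Real.sqrt (Fintype.card G) : ℂ))⁻¹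
      = ((Real.sqrt (Fintype.card G) : ℂ))⁻¹ := by
  rw [map_inv₀, Complex.conj_ofReal]

lemma chi_inv_apply (χ : A ≃* (A →* ℂ)) (a b : A) : χ a⁻¹ b = (χ a b)⁻¹ := by
  have h2 : χ a⁻¹ b * χ a b = 1 := by
    rw [← MonoidHom.mul_apply, ← map_mul, inv_mul_cancel, map_one, MonoidHom.one_apply]
  exact eq_inv_of_mul_eq_one_left h2

lemma sum_conj_u_mul_u (e : A ≃ G) (χ : A ≃* (A →* ℂ)) (h h' : G) :
    ∑ g : G, (starRingEnd ℂ) (u e χ g h) * u e χ g h' = if h = h' then 1 else 0 := by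
  have hcard : (Fintype.card G : ℂ) ≠ 0 := by
    rw [card_eq e]; exact_mod_cast Fintype.card_ne_zero
  set U : Matrix G G ℂ := Matrix.of (u e χ) with hU
  have row : U * U.conjTranspose = 1 := by
    ext g g'
    rw [Matrix.mul_apply, Matrix.one_apply]; simp only [Matrix.conjTranspose_apply]
    have hterm : ∀ x : G, U g x * star (U g' x) =
        ((Fintype.card G : ℂ))⁻¹ * (χ (e.symm g * (e.symm g')⁻¹)) (e.symm x) := by
      intro x
      simp only [hU, Matrix.of_apply, u, RCLike.star_def, map_mul, conj_sqrt_inv, conj_char,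
        char_inv]
      rw [MonoidHom.mul_apply, chi_inv_apply, ← sqrt_mul_self e]
      ring
    rw [Finset.sum_congr rfl fun x _ => hterm x, ← Finset.mul_sum,
      Equiv.sum_comp e.symm (fun b => (χ (e.symm g * (e.symm g')⁻¹)) b), sum_char]
    have hiff : (χ (e.symm g * (e.symm g')⁻¹) = 1) ↔ g = g' := by
      rw [← map_one χ, EmbeddingLike.apply_eq_iff_eq χ, mul_inv_eq_one]
      exact ⟨fun hh => e.symm.injective hh, fun hh => by rw [hh]⟩
    by_cases hgg : g = g'
    · rw [if_pos (hiff.mpr hgg), if_pos hgg, ← card_eq e, inv_mul_cancel₀ hcard]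
    · rw [if_neg (fun hc => hgg (hiff.mp hc)), if_neg hgg, mul_zero]
  have col := mul_eq_one_comm.mp row
  have hcol := congr_fun (congr_fun col h) h'
  rw [Matrix.mul_apply, Matrix.one_apply] at hcol
  simpa only [Matrix.conjTranspose_apply, hU, Matrix.of_apply, RCLike.star_def] using hcol

variable (G) in
/-- structure-independent coordinate weight -/
noncomputable def w (cc : Fin 3) (h h' : G) : ℂ :=
  if cc = 0 then ((Fintype.card G : ℂ))⁻¹
  else if cc = 1 then ((if h = h' then (1:ℂ) else 0) - ((Fintype.card G : ℂ))⁻¹)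
  else (if h = h' then (1:ℂ) else 0)

/-- entries of `M_i` -/
def mEnt (cc : Fin 3) (one : G) (g x : G) : ℂ :=
  if cc = 0 then (if g = one ∧ x = one then (1 : ℂ) else 0)
  else if cc = 1 then
    ((if g = x then (1 : ℂ) else 0) - (if g = one ∧ x = one then (1 : ℂ) else 0))
  else (if g = x then (1 : ℂ) else 0)

/-- entries of `M_i U_i` -/
noncomputable def v (cc : Fin 3) (one : G) (e : A ≃ G) (χ : A ≃* (A →* ℂ)) (g h : G) : ℂ :=
  ∑ x : G, mEnt cc one g x * u e χ x h

lemma u_one (one : G) (e : A ≃ G) (h1 : e 1 = one) (χ : A ≃* (A →* ℂ)) (h : G) :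
    u e χ one h = (Real.sqrt (Fintype.card G) : ℂ)⁻¹ := by
  have : e.symm one = 1 := by rw [← h1, Equiv.symm_apply_apply]
  rw [u, this, map_one, MonoidHom.one_apply, mul_one]

lemma vP (one : G) (e : A ≃ G) (χ : A ≃* (A →* ℂ)) (g h : G) :
    (∑ x : G, (if g = one ∧ x = one then (1:ℂ) else 0) * u e χ x h)
      = (if g = one then (1:ℂ) else 0) * u e χ one h := by
  by_cases hg : g = one <;> simp [hg, Finset.sum_ite_eq']

lemma vI (one : G) (e : A ≃ G) (χ : A ≃* (A →* ℂ)) (g h : G) :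
    (∑ x : G, (if g = x then (1:ℂ) else 0) * u e χ x h) = u e χ g h := by
  simp [Finset.sum_ite_eq]

lemma sum_conj_p_mul_p (one : G) (e : A ≃ G) (h1 : e 1 = one) (χ : A ≃* (A →* ℂ)) (h h' : G) :
    ∑ g : G, (starRingEnd ℂ) ((if g = one then (1:ℂ) else 0) * u e χ one h) *
      ((if g = one then (1:ℂ) else 0) * u e χ one h') = ((Fintype.card G : ℂ))⁻¹ := by
  rw [Finset.sum_eq_single_of_mem one (Finset.mem_univ one) (fun g _ hg => by simp [hg])]
  rw [u_one one e h1, u_one one e h1, if_pos rfl, one_mul, conj_sqrt_inv, sqrt_mul_self e]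

lemma sum_conj_p_mul_u (one : G) (e : A ≃ G) (h1 : e 1 = one) (χ : A ≃* (A →* ℂ)) (h h' : G) :
    ∑ g : G, (starRingEnd ℂ) ((if g = one then (1:ℂ) else 0) * u e χ one h) * u e χ g h'
      = ((Fintype.card G : ℂ))⁻¹ := by
  rw [Finset.sum_eq_single_of_mem one (Finset.mem_univ one) (fun g _ hg => by simp [hg])]
  rw [u_one one e h1, u_one one e h1, if_pos rfl, one_mul, conj_sqrt_inv, sqrt_mul_self e]

lemma sum_conj_u_mul_p (one : G) (e : A ≃ G) (h1 : e 1 = one) (χ : A ≃* (A →* ℂ)) (h h' : G) :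
    ∑ g : G, (starRingEnd ℂ) (u e χ g h) * ((if g = one then (1:ℂ) else 0) * u e χ one h')
      = ((Fintype.card G : ℂ))⁻¹ := by
  rw [Finset.sum_eq_single_of_mem one (Finset.mem_univ one) (fun g _ hg => by simp [hg])]
  rw [u_one one e h1, u_one one e h1, if_pos rfl, one_mul, conj_sqrt_inv, sqrt_mul_self e]

lemma key_coord (cc : Fin 3) (one : G) (e : A ≃ G) (h1 : e 1 = one) (χ : A ≃* (A →* ℂ))
    (h h' : G) :
    ∑ g : G, (starRingEnd ℂ) (v cc one e χ g h) * v cc one e χ g h' = w G cc h h' := by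
  by_cases hc0 : cc = 0
  · rw [hc0]
    simp only [v, mEnt, w, reduceIte]
    simp only [vP one e χ]
    rw [sum_conj_p_mul_p one e h1 χ h h']
  by_cases hc1 : cc = 1
  · rw [hc1]
    simp only [v, mEnt, w, Fin.reduceEq, reduceIte]
    simp only [sub_mul, Finset.sum_sub_distrib]
    simp only [vP one e χ, vI one e χ]
    have e1 := sum_conj_u_mul_u e χ h h'
    have e2 := sum_conj_u_mul_p one e h1 χ h h'
    have e3 := sum_conj_p_mul_u one e h1 χ h h'
    have e4 := sum_conj_p_mul_p one e h1 χ h h'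
    simp only [map_sub, sub_mul, mul_sub, Finset.sum_sub_distrib, e1, e2, e3, e4]
    ring
  have hc2 : cc = 2 := by omega
  rw [hc2]
  simp only [v, mEnt, w, Fin.reduceEq, reduceIte]
  simp only [vI one e χ]
  rw [sum_conj_u_mul_u e χ h h']

end Coord

lemma assemble {k : ℕ} (G : Fin k → Type*) [∀ i, Fintype (G i)] [∀ i, DecidableEq (G i)]
    (one : ∀ i, G i) (A : Fin k → Type*) [∀ i, CommGroup (A i)] [∀ i, Fintype (A i)]
    (eA : ∀ i, A i ≃ G i) (hA1 : ∀ i, eA i 1 = one i) (χA : ∀ i, A i ≃* (A i →* ℂ))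
    (UA : Matrix (∀ i, G i) (∀ i, G i) ℂ)
    (hUA : ∀ g h : ∀ i, G i, UA g h = ∏ i : Fin k,
      ((Real.sqrt (Fintype.card (G i)) : ℂ)⁻¹ *
        χA i ((eA i).symm (g i)) ((eA i).symm (h i))))
    (c : Fin k → Fin 3)
    (M : Matrix (∀ i, G i) (∀ i, G i) ℂ)
    (hM : ∀ g h : ∀ i, G i, M g h = ∏ i, mEnt (c i) (one i) (g i) (h i))
    (O : (∀ i, G i) → ℕ) :
    ((∑ g : ∀ i, G i, Complex.normSq ((M * UA).mulVec (fun h => (O h : ℂ)) g) : ℝ) : ℂ)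
    = ∑ h : ∀ i, G i, ∑ h' : ∀ i, G i,
        (starRingEnd ℂ) ((O h : ℂ)) * (O h' : ℂ) * ∏ i, w (G i) (c i) (h i) (h' i) := by
  classical
  set F : (∀ i, G i) → (∀ i, G i) → ℂ :=
    fun g h => ∏ i, v (c i) (one i) (eA i) (χA i) (g i) (h i) with hF
  have hMU : ∀ g h, (M * UA) g h = F g h := by
    intro g h
    rw [Matrix.mul_apply]
    have hx : ∀ x, M g x * UA x h
        = ∏ i, mEnt (c i) (one i) (g i) (x i) * u (eA i) (χA i) (x i) (h i) := by
      intro x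
      rw [hM, hUA, ← Finset.prod_mul_distrib]
      exact Finset.prod_congr rfl fun i _ => rfl
    calc ∑ x, M g x * UA x h
        = ∑ x : ∀ i, G i, ∏ i,
            (fun i xi => mEnt (c i) (one i) (g i) xi * u (eA i) (χA i) xi (h i)) i (x i) :=
          Finset.sum_congr rfl fun x _ => hx x
      _ = ∏ i, ∑ xi : G i, mEnt (c i) (one i) (g i) xi * u (eA i) (χA i) xi (h i) :=
          (Fintype.prod_sum (fun i xi => mEnt (c i) (one i) (g i) xi *
            u (eA i) (χA i) xi (h i))).symm
      _ = F g h := rfl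
  have hmv : ∀ g, (M * UA).mulVec (fun h => (O h : ℂ)) g = ∑ h, F g h * (O h : ℂ) := by
    intro g
    simp only [Matrix.mulVec, dotProduct, hMU]
  have hFF : ∀ h h', ∑ g, (starRingEnd ℂ) (F g h) * F g h'
      = ∏ i, w (G i) (c i) (h i) (h' i) := by
    intro h h'
    have hg : ∀ g, (starRingEnd ℂ) (F g h) * F g h'
        = ∏ i, (starRingEnd ℂ) (v (c i) (one i) (eA i) (χA i) (g i) (h i)) *
            v (c i) (one i) (eA i) (χA i) (g i) (h' i) := by
      intro g
      rw [hF]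
      rw [map_prod, ← Finset.prod_mul_distrib]
    calc ∑ g, (starRingEnd ℂ) (F g h) * F g h'
        = ∑ g : ∀ i, G i, ∏ i,
            (fun i gi => (starRingEnd ℂ) (v (c i) (one i) (eA i) (χA i) gi (h i)) *
              v (c i) (one i) (eA i) (χA i) gi (h' i)) i (g i) :=
          Finset.sum_congr rfl fun g _ => hg g
      _ = ∏ i, ∑ gi : G i, (starRingEnd ℂ) (v (c i) (one i) (eA i) (χA i) gi (h i)) *
            v (c i) (one i) (eA i) (χA i) gi (h' i) :=
          (Fintype.prod_sum (fun i gi =>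
            (starRingEnd ℂ) (v (c i) (one i) (eA i) (χA i) gi (h i)) *
              v (c i) (one i) (eA i) (χA i) gi (h' i))).symm
      _ = ∏ i, w (G i) (c i) (h i) (h' i) :=
          Finset.prod_congr rfl fun i _ =>
            key_coord (c i) (one i) (eA i) (hA1 i) (χA i) (h i) (h' i)
  have hper : ∀ g, (starRingEnd ℂ) ((M * UA).mulVec (fun h => (O h : ℂ)) g) *
        ((M * UA).mulVec (fun h => (O h : ℂ)) g)
      = ∑ h, ∑ h', (starRingEnd ℂ) ((O h : ℂ)) * (O h' : ℂ) *
          ((starRingEnd ℂ) (F g h) * F g h') := by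
    intro g
    rw [hmv, map_sum, Finset.sum_mul_sum]
    exact Finset.sum_congr rfl fun h _ => Finset.sum_congr rfl fun h' _ => by
      rw [map_mul]; ring
  calc ((∑ g : ∀ i, G i, Complex.normSq ((M * UA).mulVec (fun h => (O h : ℂ)) g) : ℝ) : ℂ)
      = ∑ g : ∀ i, G i,
          (starRingEnd ℂ) ((M * UA).mulVec (fun h => (O h : ℂ)) g) *
          ((M * UA).mulVec (fun h => (O h : ℂ)) g) := by
        push_cast
        exact Finset.sum_congr rfl fun g _ => Complex.normSq_eq_conj_mul_self
    _ = ∑ g : ∀ i, G i, ∑ h, ∑ h', (starRingEnd ℂ) ((O h : ℂ)) * (O h' : ℂ) *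
          ((starRingEnd ℂ) (F g h) * F g h') :=
        Finset.sum_congr rfl fun g _ => hper g
    _ = ∑ h, ∑ h', ∑ g : ∀ i, G i, (starRingEnd ℂ) ((O h : ℂ)) * (O h' : ℂ) *
          ((starRingEnd ℂ) (F g h) * F g h') := by
        rw [Finset.sum_comm]
        exact Finset.sum_congr rfl fun h _ => Finset.sum_comm
    _ = ∑ h, ∑ h', (starRingEnd ℂ) ((O h : ℂ)) * (O h' : ℂ) *
          ∑ g, (starRingEnd ℂ) (F g h) * F g h' := by
        exact Finset.sum_congr rfl fun h _ => Finset.sum_congr rfl fun h' _ =>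
          (Finset.mul_sum _ _ _).symm
    _ = ∑ h, ∑ h', (starRingEnd ℂ) ((O h : ℂ)) * (O h' : ℂ) *
          ∏ i, w (G i) (c i) (h i) (h' i) := by
        exact Finset.sum_congr rfl fun h _ => Finset.sum_congr rfl fun h' _ => by rw [hFF]

end NPI

/-- Let `G = G₁ × ⋯ × G_k` where each `Gᵢ` is a finite set with a
distinguished element `1ᵢ`.  An abelian group structure on `Gᵢ` with identity `1ᵢ`
is given by an abelian group (`Aᵢ`, resp. `Bᵢ`) together with a bijection onto `Gᵢ`
carrying the group identity to `1ᵢ`; each structure, together with an indexing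
`χ` of the irreducible characters by group elements, yields a normalized character
table `Uᵢ` on `ℂ^{Gᵢ}` and their tensor product `U` on `ℂ^G`.  Let
`M = M₁ ⊗ ⋯ ⊗ M_k`, where each `Mᵢ` is `Pᵢ` (the orthogonal projection onto the
identity coordinate), `Qᵢ = Iᵢ − Pᵢ`, or `Iᵢ` (as prescribed by `c i = 0, 1, 2`
respectively) — note these do not depend on the group structures.  Then for any
multiplicity function `O : G → ℕ`, the quantity `‖M U O‖²` is the same for the two
group structures. -/
theorem norm_proj_indep_of_group_structure {k : ℕ} (G : Fin k → Type*)
    [∀ i, Fintype (G i)] [∀ i, DecidableEq (G i)] (one : ∀ i, G i)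
    (A B : Fin k → Type*)
    [∀ i, CommGroup (A i)] [∀ i, Fintype (A i)]
    [∀ i, CommGroup (B i)] [∀ i, Fintype (B i)]
    (eA : ∀ i, A i ≃ G i) (eB : ∀ i, B i ≃ G i)
    (hA1 : ∀ i, eA i 1 = one i) (hB1 : ∀ i, eB i 1 = one i)
    (χA : ∀ i, A i ≃* (A i →* ℂ)) (χB : ∀ i, B i ≃* (B i →* ℂ))
    (UA UB : Matrix (∀ i, G i) (∀ i, G i) ℂ)
    (hUA : ∀ g h : ∀ i, G i, UA g h = ∏ i : Fin k,
      ((Real.sqrt (Fintype.card (G i)) : ℂ)⁻¹ *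
        χA i ((eA i).symm (g i)) ((eA i).symm (h i))))
    (hUB : ∀ g h : ∀ i, G i, UB g h = ∏ i : Fin k,
      ((Real.sqrt (Fintype.card (G i)) : ℂ)⁻¹ *
        χB i ((eB i).symm (g i)) ((eB i).symm (h i))))
    (c : Fin k → Fin 3)
    (M : Matrix (∀ i, G i) (∀ i, G i) ℂ)
    (hM : ∀ g h : ∀ i, G i, M g h = ∏ i : Fin k,
      if c i = 0 then (if g i = one i ∧ h i = one i then (1 : ℂ) else 0)
      else if c i = 1 then
        ((if g i = h i then (1 : ℂ) else 0) -
          (if g i = one i ∧ h i = one i then (1 : ℂ) else 0))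
      else (if g i = h i then (1 : ℂ) else 0))
    (O : (∀ i, G i) → ℕ) :
    (∑ g : ∀ i, G i, Complex.normSq ((M * UA).mulVec (fun h => (O h : ℂ)) g)) =
    (∑ g : ∀ i, G i, Complex.normSq ((M * UB).mulVec (fun h => (O h : ℂ)) g)) := by
  have hM' : ∀ g h : ∀ i, G i, M g h = ∏ i, NPI.mEnt (c i) (one i) (g i) (h i) :=
    fun g h => (hM g h).trans (Finset.prod_congr rfl fun i _ => rfl)
  have hA := NPI.assemble G one A eA hA1 χA UA hUA c M hM' O
  have hB := NPI.assemble G one B eB hB1 χB UB hUB c M hM' O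
  exact_mod_cast hA.trans hB.symm
end

section
/- Let G_1, ..., G_k be finite sets and let D be a fractional factorial design on G = G_1 × ... × G_k with multiplicity function O and N = Σ_g O(g) runs. Define the generalized wordlength pattern by A_j(D) = N^{-2} Σ_{wt(g)=j} |χ_g(D)|² for j = 1,...,k, where the characters χ_g arise from a choice of abelian group structure on each G_i (with the weight of g counting nonidentity components). Then the values A_1(D), ..., A_k(D) are independent of the choice of abelian group structures on the sets G_i. -/
/-!
Expanding `|χ_g(D)|²` as a double sum over pairs of runs `h, h'` turns `Σ_{wt(g)=j} |χ_g(D)|²`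
into `Σ_{h,h'} O(h) O(h') Σ_{|T|=j} ∏_{i∈T} (Σ_{x∈Gᵢ} tᵢ(x) - 1)`, where
`tᵢ(x) = χ_x(hᵢ) · conj χ_x(h'ᵢ)` satisfies `tᵢ(1ᵢ) = 1`. By column orthogonality of the
characters of `Gᵢ`, `Σ_x tᵢ(x) = |Gᵢ|·[hᵢ = h'ᵢ]`, so the result no longer involves the
group structures.
-/

open Finset ComplexConjugate

section CharacterOrthogonality

variable {A : Type*} [CommGroup A]

lemma MonoidHom.map_inv_eq_conj [Finite A] (ψ : A →* ℂ) (a : A) : ψ a⁻¹ = conj (ψ a) :=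
  AddChar.map_neg_eq_conj ((AddChar.toMonoidHomEquiv (A := Additive A)).symm ψ) (Additive.ofMul a)

variable [Fintype A] [DecidableEq A]

lemma MulEquiv.sum_apply_eq_ite (χ : A ≃* (A →* ℂ)) (a : A) :
    ∑ x, χ x a = if a = 1 then (Fintype.card A : ℂ) else 0 := by
  let e : A ≃ AddChar (Additive A) ℂ :=
    χ.toEquiv.trans (AddChar.toMonoidHomEquiv (A := Additive A)).symm
  calc ∑ x, χ x a = ∑ ψ : AddChar (Additive A) ℂ, ψ (Additive.ofMul a) :=
        Fintype.sum_equiv e _ _ fun _ => rfl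
    _ = _ := by simp [AddChar.sum_apply_eq_ite]

lemma MulEquiv.sum_apply_mul_conj_apply (χ : A ≃* (A →* ℂ)) (a b : A) :
    ∑ x, χ x a * conj (χ x b) = if a = b then (Fintype.card A : ℂ) else 0 := by
  simp_rw [← MonoidHom.map_inv_eq_conj, ← map_mul, MulEquiv.sum_apply_eq_ite, mul_inv_eq_one]

end CharacterOrthogonality

section Wordlength

variable {ι : Type*} [Fintype ι] [DecidableEq ι] {G : ι → Type*}
  [∀ i, Fintype (G i)] [∀ i, DecidableEq (G i)]

lemma filter_ne_eq_iff_mem_piFinset (one g : ∀ i, G i) (T : Finset ι) :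
    univ.filter (fun i => g i ≠ one i) = T ↔
      g ∈ Fintype.piFinset fun i => if i ∈ T then univ.erase (one i) else {one i} := by
  simp only [Finset.ext_iff, mem_filter, mem_univ, true_and, Fintype.mem_piFinset]
  refine forall_congr' fun i => ?_
  split_ifs with hi <;> simp [hi]

lemma sum_filter_card_ne_prod_eq {R : Type*} [CommRing R] (one : ∀ i, G i)
    (t : ∀ i, G i → R) (ht : ∀ i, t i (one i) = 1) (j : ℕ) :
    ∑ g ∈ univ.filter (fun g : ∀ i, G i => (univ.filter fun i => g i ≠ one i).card = j),
      ∏ i, t i (g i) = ∑ T ∈ powersetCard j univ, ∏ i ∈ T, (∑ x, t i x - 1) := by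
  rw [← sum_fiberwise_of_maps_to (t := powersetCard j univ)
    (g := fun g : ∀ i, G i => univ.filter fun i => g i ≠ one i) (by simp [mem_powersetCard])]
  refine sum_congr rfl fun T hT => ?_
  have hfiber :
      (univ.filter fun g : ∀ i, G i => (univ.filter fun i => g i ≠ one i).card = j).filter
        (fun g => univ.filter (fun i => g i ≠ one i) = T) =
      Fintype.piFinset fun i => if i ∈ T then univ.erase (one i) else {one i} := by
    ext g
    rw [mem_filter, mem_filter, ← filter_ne_eq_iff_mem_piFinset]
    simp only [mem_univ, true_and, and_iff_right_iff_imp]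
    rintro rfl
    exact (mem_powersetCard.1 hT).2
  rw [hfiber, ← prod_univ_sum, ← prod_subset (subset_univ T)]
  · refine prod_congr rfl fun i hi => ?_
    rw [if_pos hi, sum_erase_eq_sub (mem_univ _), ht]
  · intro i _ hi
    rw [if_neg hi, sum_singleton, ht]

variable {A : ι → Type*} [∀ i, CommGroup (A i)] [∀ i, Fintype (A i)]

theorem sum_normSq_charSum_eq {one : ∀ i, G i} (e : ∀ i, A i ≃ G i) (he : ∀ i, e i 1 = one i)
    (χ : ∀ i, A i ≃* (A i →* ℂ)) (O : (∀ i, G i) → ℝ) (j : ℕ) :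
    ∑ g ∈ univ.filter (fun g : ∀ i, G i => (univ.filter fun i => g i ≠ one i).card = j),
      Complex.normSq (∑ h, (O h : ℂ) * ∏ i, χ i ((e i).symm (g i)) ((e i).symm (h i))) =
    ∑ h, ∑ h', O h * O h' * ∑ T ∈ powersetCard j univ,
      ∏ i ∈ T, ((if h i = h' i then (Fintype.card (G i) : ℝ) else 0) - 1) := by
  classical
  set t : (∀ i, G i) → (∀ i, G i) → ∀ i, G i → ℂ := fun h h' i x =>
    χ i ((e i).symm x) ((e i).symm (h i)) * conj (χ i ((e i).symm x) ((e i).symm (h' i)))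
  have ht_one : ∀ h h' i, t h h' i (one i) = 1 := by simp [t, ← he]
  have hsum_t : ∀ h h' i,
      ∑ x, t h h' i x = if h i = h' i then (Fintype.card (G i) : ℂ) else 0 := by
    intro h h' i
    rw [← (e i).sum_comp]
    simp only [t, Equiv.symm_apply_apply, MulEquiv.sum_apply_mul_conj_apply,
      (e i).symm.injective.eq_iff, Fintype.card_congr (e i)]
  have hnormSq : ∀ g : ∀ i, G i,
      (Complex.normSq (∑ h, (O h : ℂ) * ∏ i, χ i ((e i).symm (g i)) ((e i).symm (h i))) : ℂ) =
        ∑ h, ∑ h', (O h * O h' : ℂ) * ∏ i, t h h' i (g i) := by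
    intro g
    rw [← Complex.mul_conj, map_sum, sum_mul_sum]
    refine sum_congr rfl fun h _ => sum_congr rfl fun h' _ => ?_
    rw [map_mul, map_prod, Complex.conj_ofReal, prod_mul_distrib]
    ring
  apply Complex.ofReal_injective
  push_cast
  simp_rw [hnormSq]
  rw [sum_comm]
  refine sum_congr rfl fun h _ => ?_
  rw [sum_comm]
  refine sum_congr rfl fun h' _ => ?_
  rw [← mul_sum, sum_filter_card_ne_prod_eq _ _ (ht_one h h')]
  simp_rw [hsum_t, apply_ite Complex.ofReal]
  push_cast
  rfl

end Wordlength

theorem GWLP_indep_of_group_structure_general {k : ℕ} (G : Fin k → Type*)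
    [∀ i, Fintype (G i)] [∀ i, DecidableEq (G i)] (one : ∀ i, G i)
    (A B : Fin k → Type*)
    [∀ i, CommGroup (A i)] [∀ i, Fintype (A i)]
    [∀ i, CommGroup (B i)] [∀ i, Fintype (B i)]
    (eA : ∀ i, A i ≃ G i) (eB : ∀ i, B i ≃ G i)
    (hA1 : ∀ i, eA i 1 = one i) (hB1 : ∀ i, eB i 1 = one i)
    (χA : ∀ i, A i ≃* (A i →* ℂ)) (χB : ∀ i, B i ≃* (B i →* ℂ))
    (O : (∀ i, G i) → ℕ) (N : ℕ)
    (wt : (∀ i, G i) → ℕ)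
    (hwt : ∀ g : ∀ i, G i, wt g = (Finset.univ.filter fun i => g i ≠ one i).card)
    (JA JB : (∀ i, G i) → ℂ)
    (hJA : ∀ g : ∀ i, G i, JA g = ∑ h : ∀ i, G i,
      (O h : ℂ) * ∏ i : Fin k, χA i ((eA i).symm (g i)) ((eA i).symm (h i)))
    (hJB : ∀ g : ∀ i, G i, JB g = ∑ h : ∀ i, G i,
      (O h : ℂ) * ∏ i : Fin k, χB i ((eB i).symm (g i)) ((eB i).symm (h i)))
    (AjA AjB : ℕ → ℝ)
    (hAjA : ∀ j, AjA j = ((N : ℝ) ^ 2)⁻¹ *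
      ∑ g ∈ Finset.univ.filter (fun g : ∀ i, G i => wt g = j), Complex.normSq (JA g))
    (hAjB : ∀ j, AjB j = ((N : ℝ) ^ 2)⁻¹ *
      ∑ g ∈ Finset.univ.filter (fun g : ∀ i, G i => wt g = j), Complex.normSq (JB g)) :
    ∀ j, 1 ≤ j → j ≤ k → AjA j = AjB j := by
  intro j _ _
  have hA := sum_normSq_charSum_eq eA hA1 χA (fun h => (O h : ℝ)) j
  have hB := sum_normSq_charSum_eq eB hB1 χB (fun h => (O h : ℝ)) j
  simp only [Complex.ofReal_natCast] at hA hB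
  simp_rw [hAjA, hAjB, hwt, hJA, hJB, hA, hB]

/-- Theorem 2 of the paper: invariance of the generalized
wordlength pattern.  Let `G₁, …, G_k` be finite sets and `D` a fractional
factorial design on `G = G₁ × ⋯ × G_k` with multiplicity function `O : G → ℕ` and
`N = Σ_g O(g)` runs.  An abelian group structure on `Gᵢ` (with identity the
distinguished element `1ᵢ`) is given by an abelian group (`Aᵢ`, resp. `Bᵢ`) with a
bijection onto `Gᵢ` sending the group identity to `1ᵢ`, together with an indexing
of the irreducible characters by group elements; it yields the characters
`χ_g(h) = ∏ᵢ χ_{gᵢ}(hᵢ)`, the J-characteristics `χ_g(D) = Σ_h O(h) χ_g(h)`, and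
the generalized wordlengths `A_j(D) = N⁻² Σ_{wt(g)=j} |χ_g(D)|²`, where `wt(g)`
counts the nonidentity components of `g`.  Then for every `j = 1, …, k` the value
`A_j(D)` is the same for both group structures. -/
theorem GWLP_indep_of_group_structure {k : ℕ} (G : Fin k → Type*)
    [∀ i, Fintype (G i)] [∀ i, DecidableEq (G i)] (one : ∀ i, G i)
    (A B : Fin k → Type*)
    [∀ i, CommGroup (A i)] [∀ i, Fintype (A i)]
    [∀ i, CommGroup (B i)] [∀ i, Fintype (B i)]
    (eA : ∀ i, A i ≃ G i) (eB : ∀ i, B i ≃ G i)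
    (hA1 : ∀ i, eA i 1 = one i) (hB1 : ∀ i, eB i 1 = one i)
    (χA : ∀ i, A i ≃* (A i →* ℂ)) (χB : ∀ i, B i ≃* (B i →* ℂ))
    (O : (∀ i, G i) → ℕ) (N : ℕ) (hN : N = ∑ g : ∀ i, G i, O g)
    (wt : (∀ i, G i) → ℕ)
    (hwt : ∀ g : ∀ i, G i, wt g = (Finset.univ.filter fun i => g i ≠ one i).card)
    (JA JB : (∀ i, G i) → ℂ)
    (hJA : ∀ g : ∀ i, G i, JA g = ∑ h : ∀ i, G i,
      (O h : ℂ) * ∏ i : Fin k, χA i ((eA i).symm (g i)) ((eA i).symm (h i)))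
    (hJB : ∀ g : ∀ i, G i, JB g = ∑ h : ∀ i, G i,
      (O h : ℂ) * ∏ i : Fin k, χB i ((eB i).symm (g i)) ((eB i).symm (h i)))
    (AjA AjB : ℕ → ℝ)
    (hAjA : ∀ j, AjA j = ((N : ℝ) ^ 2)⁻¹ *
      ∑ g ∈ Finset.univ.filter (fun g : ∀ i, G i => wt g = j), Complex.normSq (JA g))
    (hAjB : ∀ j, AjB j = ((N : ℝ) ^ 2)⁻¹ *
      ∑ g ∈ Finset.univ.filter (fun g : ∀ i, G i => wt g = j), Complex.normSq (JB g)) :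
    ∀ j, 1 ≤ j → j ≤ k → AjA j = AjB j :=
  GWLP_indep_of_group_structure_general G one A B eA eB hA1 hB1 χA χB O N wt hwt JA JB hJA hJB AjA
    AjB hAjA hAjB
end
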